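/- arXiv:2001.00052 — 4 statements merged into one kernel-verified Lean document; each statement's English description precedes it below -/
import Mathlib

section
/- A finitely generated group in which finite-dimensional unitary representations separate points (i.e., a maximally almost periodic group) is residually finite. -/
/-- A group is residually finite if homomorphisms to finite groups separate points. -/
def IsResiduallyFinite (G : Type*) [Group G] : Prop :=
  ∀ g : G, g ≠ 1 → ∃ (F : Type) (_ : Group F) (_ : Finite F) (f : G →* F), f g ≠ 1

/-- A group is maximally almost periodic if finite-dimensional unitary representations
separate points. -/
def IsMAP (G : Type*) [Group G] : Prop :=
  ∀ g : G, g ≠ 1 → ∃ (n : ℕ) (π : G →* Matrix.unitaryGroup (Fin n) ℂ), π g ≠ 1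

/-!
Let `ρ : G → U(n) ⊆ Mₙ(ℂ)` be a representation with `ρ g ≠ 1`. If `G` is generated by a finite
set `S`, every entry of every `ρ h` lies in the finitely generated subring `A ⊆ ℂ` generated by
the entries of `ρ s` for `s ∈ S ∪ S⁻¹`. Being of finite type over `ℤ`, the reduced ring `A` is
Jacobson, so a nonzero entry of `ρ g - 1` avoids some maximal ideal `m`; the residue field `A ⧸ m`
is finite by Zariski's lemma (in characteristic zero it would make `ℤ` a field). Reducing `ρ`
modulo `m` gives a homomorphism to the finite group `GLₙ(A ⧸ m)` that does not kill `g`.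
-/

theorem isJacobsonRing_of_jacobson_bot_eq_bot {R : Type*} [CommRing R] [IsDomain R]
    [IsPrincipalIdealRing R] (h : (⊥ : Ideal R).jacobson = ⊥) : IsJacobsonRing R := by
  refine isJacobsonRing_iff_prime_eq.mpr fun {P} hP => ?_
  rcases eq_or_ne P ⊥ with rfl | hP0
  · exact h
  · have := hP.isMaximal hP0
    exact Ideal.jacobson_eq_self_of_isMaximal

theorem Int.jacobson_bot : (⊥ : Ideal ℤ).jacobson = ⊥ := by
  refine eq_bot_iff.mpr fun x hx => ?_
  have h₁ := Int.isUnit_iff.mp (Ideal.mem_jacobson_bot.mp hx 1)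
  have h₂ := Int.isUnit_iff.mp (Ideal.mem_jacobson_bot.mp hx (-1))
  rw [Ideal.mem_bot]
  omega

instance Int.isJacobsonRing : IsJacobsonRing ℤ :=
  isJacobsonRing_of_jacobson_bot_eq_bot Int.jacobson_bot

theorem finite_of_finiteType_int (K : Type*) [Field K] [Algebra ℤ K] [Algebra.FiniteType ℤ K] :
    Finite K := by
  obtain rfl : ‹Algebra ℤ K› = Ring.toIntAlgebra K := Subsingleton.elim _ _
  have : Module.Finite ℤ K := finite_of_finite_type_of_isJacobsonRing ℤ K
  obtain hchar | ⟨p, hp, hchar⟩ := CharP.exists' K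
  · have : Algebra.IsIntegral ℤ K := Algebra.IsIntegral.of_finite ℤ K
    exact (Int.not_isField ((Algebra.IsIntegral.isField_iff_isField
      (algebraMap ℤ K).injective_int).mpr (Field.toIsField K))).elim
  · let : Algebra (ZMod p) K := ZMod.algebra K p
    have : Module.Finite (ZMod p) K := Module.Finite.of_restrictScalars_finite ℤ _ _
    exact Module.finite_of_finite (ZMod p)

theorem Ideal.exists_isMaximal_notMem_of_not_isNilpotent {A : Type*} [CommRing A]
    [IsJacobsonRing A] {c : A} (hc : ¬IsNilpotent c) : ∃ m : Ideal A, m.IsMaximal ∧ c ∉ m := by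
  have : c ∉ (⊥ : Ideal A).jacobson := by
    rwa [← Ideal.radical_eq_jacobson, ← Ideal.zero_eq_bot, ← nilradical, mem_nilradical]
  simp only [Ideal.jacobson, Ideal.mem_sInf, not_forall] at this
  obtain ⟨m, ⟨-, hm⟩, hcm⟩ := this
  exact ⟨m, hm, hcm⟩

universe u v

theorem exists_ringHom_finite_field_ne_zero {A : Type u} [CommRing A] [IsReduced A]
    [Algebra ℤ A] [Algebra.FiniteType ℤ A] {c : A} (hc : c ≠ 0) :
    ∃ (K : Type u) (_ : Field K) (_ : Finite K) (φ : A →+* K), φ c ≠ 0 := by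
  have : IsJacobsonRing A := isJacobsonRing_of_finiteType (A := ℤ)
  obtain ⟨m, hm, hcm⟩ :=
    Ideal.exists_isMaximal_notMem_of_not_isNilpotent (mt IsNilpotent.eq_zero hc)
  let : Field (A ⧸ m) := Ideal.Quotient.field m
  have : Algebra.FiniteType ℤ (A ⧸ m) :=
    .of_surjective (Ideal.Quotient.mkₐ ℤ m) (Ideal.Quotient.mkₐ_surjective ℤ m)
  exact ⟨A ⧸ m, _, finite_of_finiteType_int _, Ideal.Quotient.mk m,
    by rwa [Ne, Ideal.Quotient.eq_zero_iff_mem]⟩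

theorem exists_ringHom_finite_field_mapMatrix_ne_one {A : Type u} [CommRing A] [IsReduced A]
    [Algebra ℤ A] [Algebra.FiniteType ℤ A] {n : Type*} [Fintype n] [DecidableEq n]
    {M : Matrix n n A} (hM : M ≠ 1) :
    ∃ (K : Type u) (_ : Field K) (_ : Finite K) (φ : A →+* K), φ.mapMatrix M ≠ 1 := by
  obtain ⟨i, j, hij⟩ : ∃ i j, (M - 1) i j ≠ 0 := by
    by_contra! h
    exact hM (sub_eq_zero.mp (Matrix.ext h))
  obtain ⟨K, _, _, φ, hφ⟩ := exists_ringHom_finite_field_ne_zero hij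
  refine ⟨K, _, ‹_›, φ, fun h => hφ ?_⟩
  have hsub : φ.mapMatrix (M - 1) = 0 := by rw [map_sub, h, map_one, sub_self]
  simpa using congrFun₂ hsub i j

theorem MonoidHom.map_mem_of_closure_eq_top {G M : Type*} [Group G] [Monoid M] (ρ : G →* M)
    {S : Set G} (hS : Subgroup.closure S = ⊤) {N : Submonoid M} (h : ∀ s ∈ S ∪ S⁻¹, ρ s ∈ N)
    (g : G) : ρ g ∈ N := by
  have hg : g ∈ Submonoid.closure (S ∪ S⁻¹) := by
    rw [← Subgroup.closure_toSubmonoid, hS]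
    trivial
  exact Submonoid.closure_le (S := N.comap ρ) |>.mpr h hg

namespace Subalgebra

variable {R A G : Type*} [CommSemiring R] [Semiring A] [Algebra R A] [Monoid G]
  {n : Type*} [Fintype n] [DecidableEq n]

def matrixCodRestrict (S : Subalgebra R A) (ρ : G →* Matrix n n A) (h : ∀ g, ρ g ∈ S.matrix) :
    G →* Matrix n n S where
  toFun g := Matrix.of fun i j => ⟨ρ g i j, h g i j⟩
  map_one' := by ext i j; by_cases hij : i = j <;> simp [hij, Matrix.one_apply]
  map_mul' a b := by ext i j; simp [Matrix.mul_apply]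

theorem val_mapMatrix_matrixCodRestrict (S : Subalgebra R A) (ρ : G →* Matrix n n A)
    (h : ∀ g, ρ g ∈ S.matrix) (g : G) : S.val.mapMatrix (S.matrixCodRestrict ρ h g) = ρ g :=
  rfl

end Subalgebra

theorem exists_fg_subalgebra_forall_mem_matrix {G R : Type*} [Group G] [Group.FG G] [CommRing R]
    {n : Type*} [Fintype n] [DecidableEq n] (ρ : G →* Matrix n n R) :
    ∃ A : Subalgebra ℤ R, A.FG ∧ ∀ g, ρ g ∈ A.matrix := by
  obtain ⟨S, hS⟩ := Group.FG.out (G := G)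
  let T : Set R := ⋃ s ∈ (S ∪ S⁻¹ : Set G), Set.range fun p : n × n => ρ s p.1 p.2
  have hT : T.Finite :=
    (S.finite_toSet.union S.finite_toSet.inv).biUnion fun s _ => Set.finite_range _
  refine ⟨Algebra.adjoin ℤ T, Subalgebra.fg_def.mpr ⟨T, hT, rfl⟩, fun g => ?_⟩
  exact ρ.map_mem_of_closure_eq_top hS (N := (Algebra.adjoin ℤ T).matrix.toSubmonoid)
    (fun s hs i j => Algebra.subset_adjoin (Set.mem_biUnion hs ⟨(i, j), rfl⟩)) g

theorem MonoidHom.exists_hom_finite_apply_ne_one_of_matrix {G : Type*} {R : Type u} [Group G]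
    [Group.FG G] [CommRing R] [IsReduced R] {n : Type v} [Fintype n] [DecidableEq n]
    (ρ : G →* Matrix n n R) {g : G} (hg : ρ g ≠ 1) :
    ∃ (F : Type max u v) (_ : Group F) (_ : Finite F) (f : G →* F), f g ≠ 1 := by
  obtain ⟨A, hA, hρA⟩ := exists_fg_subalgebra_forall_mem_matrix ρ
  have : Algebra.FiniteType ℤ A := (Subalgebra.fg_iff_finiteType A).mp hA
  have : IsReduced A := isReduced_of_injective A.val Subtype.val_injective
  set ρA := A.matrixCodRestrict ρ hρA
  have hgA : ρA g ≠ 1 := fun h => hg <| by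
    rw [← A.val_mapMatrix_matrixCodRestrict ρ hρA, h, map_one]
  obtain ⟨K, _, _, φ, hφ⟩ := exists_ringHom_finite_field_mapMatrix_ne_one hgA
  refine ⟨(Matrix n n K)ˣ, _, inferInstance,
    (Units.map φ.mapMatrix.toMonoidHom).comp ρA.toHomUnits, fun h => hφ ?_⟩
  simpa using congrArg Units.val h

/-- A finitely generated maximally almost periodic group is residually finite. -/
theorem fg_map_implies_rf (G : Type*) [Group G] (hfg : Group.FG G) (hmap : IsMAP G) :
    IsResiduallyFinite G := by
  intro g hg
  obtain ⟨n, π, hπ⟩ := hmap g hg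
  exact ((Matrix.unitaryGroup (Fin n) ℂ).subtype.comp π).exists_hom_finite_apply_ne_one_of_matrix
    fun h => hπ (Subtype.ext h)
end

section
/- Let ρ and ρ_n (n ∈ ℕ) be (possibly degenerate) representations of a C*-algebra A on a Hilbert space H such that ρ_n(a) → ρ(a) in the strong operator topology for every a ∈ A. Then there exist multiplicities m_n ∈ ℕ such that the direct sums ρ_n^{⊕ m_n} converge pointwise in the strong operator topology to the infinite amplification ρ^{(∞)} on H^{(∞)} = ⊕_{k∈ℕ} H. -/
open Filter
open scoped ENNReal

/-- Lemma (`infty`): if representations `ρn` of a C*-algebra converge pointwise in the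
strong operator topology to `ρ` on a Hilbert space `H`, then suitable finite multiples
`ρn^{⊕ mₙ}` (viewed as degenerate representations on `H^{(∞)} = ⊕₂ H` supported on the
first `mₙ` coordinates) converge pointwise in the strong operator topology to the
infinite amplification `ρ^{(∞)}`. -/
theorem exists_multiplicities_amplification_SOT_tendsto
    {A : Type*} [CStarAlgebra A]
    {H : Type*} [NormedAddCommGroup H] [InnerProductSpace ℂ H] [CompleteSpace H]
    (ρ : A →⋆ₙₐ[ℂ] (H →L[ℂ] H)) (ρn : ℕ → (A →⋆ₙₐ[ℂ] (H →L[ℂ] H)))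
    (hSOT : ∀ (a : A) (x : H), Tendsto (fun n => ρn n a x) atTop (nhds (ρ a x)))
    -- the infinite amplification of `ρ` on `H^{(∞)}`
    (ρinf : A → (lp (fun _ : ℕ => H) 2 →L[ℂ] lp (fun _ : ℕ => H) 2))
    (hρinf : ∀ (a : A) (ξ : lp (fun _ : ℕ => H) 2) (k : ℕ), (ρinf a ξ) k = ρ a (ξ k))
    -- the `m`-fold amplification of `ρn n`, supported on the first `m` coordinates
    (ρamp : ℕ → ℕ → A → (lp (fun _ : ℕ => H) 2 →L[ℂ] lp (fun _ : ℕ => H) 2))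
    (hρamp : ∀ (n m : ℕ) (a : A) (ξ : lp (fun _ : ℕ => H) 2) (k : ℕ),
      (ρamp n m a ξ) k = if k < m then ρn n a (ξ k) else 0) :
    ∃ m : ℕ → ℕ, ∀ (a : A) (ξ : lp (fun _ : ℕ => H) 2),
      Tendsto (fun n => ρamp n (m n) a ξ) atTop (nhds (ρinf a ξ)) := by
  refine ⟨fun n => n, fun a ξ => ?_⟩
  rw [tendsto_iff_norm_sub_tendsto_zero]
  -- coordinates of the difference
  set T : ℕ → lp (fun _ : ℕ => H) 2 := fun n => ρamp n n a ξ - ρinf a ξ with hTdef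
  have hcoord : ∀ n k, (T n : ∀ _ : ℕ, H) k
      = (if k < n then ρn n a (ξ k) - ρ a (ξ k) else -(ρ a (ξ k))) := by
    intro n k
    have : (T n : ∀ _ : ℕ, H) k = (ρamp n n a ξ : ∀ _ : ℕ, H) k - (ρinf a ξ : ∀ _ : ℕ, H) k := by
      simp [hTdef, lp.coeFn_sub, Pi.sub_apply]
    rw [this, hρamp, hρinf]
    split <;> simp
  -- summability of the squared norms of ξ
  have hξsum : Summable (fun k => ‖(ξ : ∀ _ : ℕ, H) k‖ ^ 2) := by
    have h := (lp.memℓp ξ).summable (p := 2) (by norm_num)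
    have : (fun k => ‖(ξ : ∀ _ : ℕ, H) k‖ ^ ((2 : ℝ≥0∞).toReal))
        = fun k => ‖(ξ : ∀ _ : ℕ, H) k‖ ^ 2 := by
      ext k
      rw [ENNReal.toReal_ofNat, Real.rpow_two]
    rwa [this] at h
  -- the tail sequence
  set c : ℕ → ℝ := fun k => ‖ρ a ((ξ : ∀ _ : ℕ, H) k)‖ ^ 2 with hcdef
  have hcsum : Summable c := by
    refine Summable.of_nonneg_of_le (fun k => by positivity)
      (fun k => ?_) (hξsum.mul_left (‖a‖ ^ 2))
    have h1 : ‖ρ a ((ξ : ∀ _ : ℕ, H) k)‖ ≤ ‖a‖ * ‖(ξ : ∀ _ : ℕ, H) k‖ := by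
      calc ‖ρ a ((ξ : ∀ _ : ℕ, H) k)‖ ≤ ‖ρ a‖ * ‖(ξ : ∀ _ : ℕ, H) k‖ :=
            (ρ a).le_opNorm _
        _ ≤ ‖a‖ * ‖(ξ : ∀ _ : ℕ, H) k‖ := by
            gcongr; exact NonUnitalStarAlgHom.norm_apply_le ρ a
    calc c k ≤ (‖a‖ * ‖(ξ : ∀ _ : ℕ, H) k‖) ^ 2 := by
          rw [hcdef]; exact pow_le_pow_left₀ (norm_nonneg _) h1 2
      _ = ‖a‖ ^ 2 * ‖(ξ : ∀ _ : ℕ, H) k‖ ^ 2 := by ring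
  -- the dominating bound for the "head" part
  have hbd : ∀ n k, ‖ρn n a ((ξ : ∀ _ : ℕ, H) k) - ρ a ((ξ : ∀ _ : ℕ, H) k)‖
      ≤ 2 * ‖a‖ * ‖(ξ : ∀ _ : ℕ, H) k‖ := by
    intro n k
    have h1 : ‖ρn n a ((ξ : ∀ _ : ℕ, H) k)‖ ≤ ‖a‖ * ‖(ξ : ∀ _ : ℕ, H) k‖ := by
      calc ‖ρn n a ((ξ : ∀ _ : ℕ, H) k)‖ ≤ ‖ρn n a‖ * ‖(ξ : ∀ _ : ℕ, H) k‖ :=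
            (ρn n a).le_opNorm _
        _ ≤ ‖a‖ * ‖(ξ : ∀ _ : ℕ, H) k‖ := by
            gcongr; exact NonUnitalStarAlgHom.norm_apply_le (ρn n) a
    have h2 : ‖ρ a ((ξ : ∀ _ : ℕ, H) k)‖ ≤ ‖a‖ * ‖(ξ : ∀ _ : ℕ, H) k‖ := by
      calc ‖ρ a ((ξ : ∀ _ : ℕ, H) k)‖ ≤ ‖ρ a‖ * ‖(ξ : ∀ _ : ℕ, H) k‖ :=
            (ρ a).le_opNorm _
        _ ≤ ‖a‖ * ‖(ξ : ∀ _ : ℕ, H) k‖ := by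
            gcongr; exact NonUnitalStarAlgHom.norm_apply_le ρ a
    calc ‖ρn n a ((ξ : ∀ _ : ℕ, H) k) - ρ a ((ξ : ∀ _ : ℕ, H) k)‖
        ≤ ‖ρn n a ((ξ : ∀ _ : ℕ, H) k)‖ + ‖ρ a ((ξ : ∀ _ : ℕ, H) k)‖ := norm_sub_le _ _
      _ ≤ 2 * ‖a‖ * ‖(ξ : ∀ _ : ℕ, H) k‖ := by linarith
  -- the head sum tends to 0 by dominated convergence
  set S1 : ℕ → ℝ := fun n => ∑' k, ‖ρn n a ((ξ : ∀ _ : ℕ, H) k) - ρ a ((ξ : ∀ _ : ℕ, H) k)‖ ^ 2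
    with hS1def
  have hS1 : Tendsto S1 atTop (nhds 0) := by
    have hbound : Summable (fun k => (2 * ‖a‖ * ‖(ξ : ∀ _ : ℕ, H) k‖) ^ 2) := by
      have : (fun k => (2 * ‖a‖ * ‖(ξ : ∀ _ : ℕ, H) k‖) ^ 2)
          = fun k => (2 * ‖a‖) ^ 2 * ‖(ξ : ∀ _ : ℕ, H) k‖ ^ 2 := by ext k; ring
      rw [this]; exact hξsum.mul_left _
    have := tendsto_tsum_of_dominated_convergence (𝓕 := atTop)
      (f := fun n k => ‖ρn n a ((ξ : ∀ _ : ℕ, H) k) - ρ a ((ξ : ∀ _ : ℕ, H) k)‖ ^ 2)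
      (g := fun _ => (0 : ℝ)) hbound
      (fun k => by
        have h0 : Tendsto (fun n => ρn n a ((ξ : ∀ _ : ℕ, H) k)
            - ρ a ((ξ : ∀ _ : ℕ, H) k)) atTop (nhds 0) := by
          simpa [sub_self] using (hSOT a ((ξ : ∀ _ : ℕ, H) k)).sub_const (ρ a ((ξ : ∀ _ : ℕ, H) k))
        have h1 : Tendsto (fun n => ‖ρn n a ((ξ : ∀ _ : ℕ, H) k)
            - ρ a ((ξ : ∀ _ : ℕ, H) k)‖) atTop (nhds 0) := by
          simpa using h0.norm
        simpa using h1.pow 2)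
      (Eventually.of_forall fun n k => by
        rw [Real.norm_of_nonneg (by positivity)]
        exact pow_le_pow_left₀ (norm_nonneg _) (hbd n k) 2)
    simpa [tsum_zero] using this
  -- the tail sum tends to 0
  set S2 : ℕ → ℝ := fun n => ∑' k, c (k + n) with hS2def
  have hS2 : Tendsto S2 atTop (nhds 0) := tendsto_sum_nat_add c
  -- the squared lp-norm of T n is bounded by S1 n + S2 n
  have hkey : ∀ n, ‖T n‖ ^ 2 ≤ S1 n + S2 n := by
    intro n
    have hnorm : ‖T n‖ ^ (2 : ℝ) = ∑' k, ‖(T n : ∀ _ : ℕ, H) k‖ ^ (2 : ℝ) := by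
      have := lp.norm_rpow_eq_tsum (p := 2) (by norm_num) (T n)
      simpa [ENNReal.toReal_ofNat] using this
    have hnorm' : ‖T n‖ ^ 2 = ∑' k, ‖(T n : ∀ _ : ℕ, H) k‖ ^ 2 := by
      rw [← Real.rpow_two, hnorm]
      congr 1; ext k; rw [Real.rpow_two]
    -- tail: rewrite S2 as a tsum of an indicator
    have htail : (∑' k, (if k < n then (0 : ℝ) else c k)) = S2 n := by
      rw [hS2def]
      refine (Function.Injective.tsum_eq (g := fun j : ℕ => j + n)
        (add_left_injective n) (f := fun k => if k < n then (0 : ℝ) else c k) ?_).symm.trans ?_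
      · intro k hk
        simp only [Function.mem_support] at hk
        by_cases h : k < n
        · simp [h] at hk
        · exact ⟨k - n, by show k - n + n = k; omega⟩
      · congr 1; ext j; simp
    -- termwise bound
    have hterm : ∀ k, ‖(T n : ∀ _ : ℕ, H) k‖ ^ 2
        ≤ ‖ρn n a ((ξ : ∀ _ : ℕ, H) k) - ρ a ((ξ : ∀ _ : ℕ, H) k)‖ ^ 2
          + (if k < n then (0 : ℝ) else c k) := by
      intro k
      rw [hcoord]
      by_cases h : k < n
      · simp only [if_pos h]
        have : (0:ℝ) ≤ ‖ρn n a ((ξ : ∀ _ : ℕ, H) k) - ρ a ((ξ : ∀ _ : ℕ, H) k)‖ ^ 2 := by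
          positivity
        linarith
      · simp only [if_neg h, hcdef, norm_neg]
        have : (0:ℝ) ≤ ‖ρn n a ((ξ : ∀ _ : ℕ, H) k) - ρ a ((ξ : ∀ _ : ℕ, H) k)‖ ^ 2 := by
          positivity
        linarith
    have hTsum : Summable (fun k => ‖(T n : ∀ _ : ℕ, H) k‖ ^ 2) := by
      have h := (lp.memℓp (T n)).summable (p := 2) (by norm_num)
      have heq : (fun k => ‖(T n : ∀ _ : ℕ, H) k‖ ^ ((2 : ℝ≥0∞).toReal))
          = fun k => ‖(T n : ∀ _ : ℕ, H) k‖ ^ 2 := by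
        ext k; rw [ENNReal.toReal_ofNat, Real.rpow_two]
      rwa [heq] at h
    have hS1sum : Summable (fun k =>
        ‖ρn n a ((ξ : ∀ _ : ℕ, H) k) - ρ a ((ξ : ∀ _ : ℕ, H) k)‖ ^ 2) := by
      refine Summable.of_nonneg_of_le (fun k => by positivity) (fun k => ?_)
        ((hξsum.mul_left ((2 * ‖a‖) ^ 2)))
      calc ‖ρn n a ((ξ : ∀ _ : ℕ, H) k) - ρ a ((ξ : ∀ _ : ℕ, H) k)‖ ^ 2
          ≤ (2 * ‖a‖ * ‖(ξ : ∀ _ : ℕ, H) k‖) ^ 2 :=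
            pow_le_pow_left₀ (norm_nonneg _) (hbd n k) 2
        _ = (2 * ‖a‖) ^ 2 * ‖(ξ : ∀ _ : ℕ, H) k‖ ^ 2 := by ring
    have hIndSum : Summable (fun k => (if k < n then (0 : ℝ) else c k)) := by
      refine Summable.of_nonneg_of_le (fun k => ?_) (fun k => ?_) hcsum
      · split
        · exact le_refl _
        · positivity
      · split
        · positivity
        · exact le_refl _
    calc ‖T n‖ ^ 2 = ∑' k, ‖(T n : ∀ _ : ℕ, H) k‖ ^ 2 := hnorm'
      _ ≤ ∑' k, (‖ρn n a ((ξ : ∀ _ : ℕ, H) k) - ρ a ((ξ : ∀ _ : ℕ, H) k)‖ ^ 2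
            + (if k < n then (0 : ℝ) else c k)) :=
          Summable.tsum_le_tsum hterm hTsum (hS1sum.add hIndSum)
      _ = S1 n + (∑' k, (if k < n then (0 : ℝ) else c k)) := by
          rw [Summable.tsum_add hS1sum hIndSum]
      _ = S1 n + S2 n := by rw [htail]
  -- squeeze: ‖T n‖^2 → 0
  have hsq : Tendsto (fun n => ‖T n‖ ^ 2) atTop (nhds 0) := by
    have h0 : Tendsto (fun n => S1 n + S2 n) atTop (nhds 0) := by
      simpa using hS1.add hS2
    refine squeeze_zero (fun n => by positivity) hkey h0
  -- conclude ‖T n‖ → 0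
  have : Tendsto (fun n => Real.sqrt (‖T n‖ ^ 2)) atTop (nhds 0) := by
    have h := (Real.continuous_sqrt.tendsto 0).comp hsq
    rw [Real.sqrt_zero] at h
    exact h
  have heq : (fun n => Real.sqrt (‖T n‖ ^ 2)) = fun n => ‖T n‖ := by
    ext n; exact Real.sqrt_sq (norm_nonneg _)
  rw [heq] at this
  exact this
end

section
/- Let G be a group, C a subgroup, λ a one-dimensional unitary representation (character with values in the unit circle) of C, and ρ a unitary representation of G on a Hilbert space with ρ(c) = λ(c)·1 for all c ∈ C. If an element f = Σ t_g g of the group algebra ℂG satisfies Σ_{g⁻¹h ∈ C} conj(t_g) t_h λ(g⁻¹h) = 0, then ρ(f) = 0. -/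
open scoped Classical

/-!
Extend `λ` by zero to `G` and fix a representative `x_b` of each left coset `b = x_b C`.
Since `ρ(x_b c) = λ(c) ρ(x_b)`, the element `ρ(f)` is `Σ_b A_b ρ(x_b)` with coefficients
`A_b = Σ_h t_h λ(x_b⁻¹ h)`, while the hypothesis says `Σ_b |A_b|² = 0`, because
`λ(g⁻¹ h) = conj(λ(x_b⁻¹ g)) λ(x_b⁻¹ h)` for `g, h ∈ b`.
-/

open Finset

theorem Complex.eq_zero_of_sum_conj_mul_self_eq_zero {ι : Type*} {s : Finset ι} {z : ι → ℂ}
    (h : ∑ i ∈ s, starRingEnd ℂ (z i) * z i = 0) : ∀ i ∈ s, z i = 0 := by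
  simp_rw [Complex.conj_mul'] at h
  norm_cast at h
  rw [sum_eq_zero_iff_of_nonneg fun i _ => by positivity] at h
  intro i hi
  simpa using h i hi

namespace Subgroup

variable {G : Type*} [Group G] {C : Subgroup G}

noncomputable def extendByZero (lam : C →* ℂ) (k : G) : ℂ :=
  if hk : k ∈ C then lam ⟨k, hk⟩ else 0

variable (lam : C →* ℂ)

theorem extendByZero_of_mem {k : G} (hk : k ∈ C) : extendByZero lam k = lam ⟨k, hk⟩ :=
  dif_pos hk

theorem extendByZero_of_notMem {k : G} (hk : k ∉ C) : extendByZero lam k = 0 :=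
  dif_neg hk

theorem dite_mul_eq_mul_extendByZero (a : ℂ) (k : G) :
    (if hk : k ∈ C then a * lam ⟨k, hk⟩ else 0) = a * extendByZero lam k := by
  unfold extendByZero
  split_ifs <;> simp

theorem extendByZero_mul_left (c : C) (k : G) :
    extendByZero lam (c * k) = lam c * extendByZero lam k := by
  by_cases hk : k ∈ C
  · rw [extendByZero_of_mem lam hk, extendByZero_of_mem lam (C.mul_mem c.2 hk), ← map_mul]
    rfl
  · have hck : (c : G) * k ∉ C := (C.mul_mem_cancel_left c.2).not.mpr hk
    rw [extendByZero_of_notMem lam hk, extendByZero_of_notMem lam hck, mul_zero]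

theorem extendByZero_inv_mul_eq (hlam : ∀ c : C, ‖lam c‖ = 1) {x g : G} (hxg : x⁻¹ * g ∈ C)
    (h : G) :
    extendByZero lam (g⁻¹ * h) =
      starRingEnd ℂ (extendByZero lam (x⁻¹ * g)) * extendByZero lam (x⁻¹ * h) := by
  have hsplit : g⁻¹ * h = ((⟨x⁻¹ * g, hxg⟩ : C)⁻¹ : C) * (x⁻¹ * h) := by simp [mul_assoc]
  rw [hsplit, extendByZero_mul_left, extendByZero_of_mem lam hxg, map_inv,
    Complex.inv_eq_conj (hlam _)]

theorem map_eq_extendByZero_smul {A : Type*} [Semiring A] [Algebra ℂ A] (ρ : G →* A)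
    (hscalar : ∀ c : C, ρ c = lam c • (1 : A)) {x g : G} (hxg : x⁻¹ * g ∈ C) :
    ρ g = extendByZero lam (x⁻¹ * g) • ρ x := by
  conv_lhs => rw [← mul_inv_cancel_left x g]
  rw [map_mul, extendByZero_of_mem lam hxg, show ρ (x⁻¹ * g) = _ from hscalar ⟨x⁻¹ * g, hxg⟩,
    mul_smul_comm, mul_one]

end Subgroup

namespace QuotientGroup

variable {G : Type*} [Group G] {C : Subgroup G}

theorem inv_out_mul_mem_iff {b : G ⧸ C} {g : G} : b.out⁻¹ * g ∈ C ↔ (g : G ⧸ C) = b := by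
  rw [← QuotientGroup.eq, QuotientGroup.out_eq', eq_comm]

theorem sum_out_eq_of_coset {M : Type*} [AddCommMonoid M] {Q : Finset (G ⧸ C)} {g : G}
    (hg : (g : G ⧸ C) ∈ Q) (φ : G → M) (hφ : ∀ x, x⁻¹ * g ∉ C → φ x = 0) :
    ∑ b ∈ Q, φ b.out = φ (g : G ⧸ C).out :=
  sum_eq_single_of_mem _ hg fun b _ hb => hφ b.out (inv_out_mul_mem_iff.not.mpr hb.symm)

end QuotientGroup

section CosetExpansion

open Subgroup QuotientGroup

variable {G : Type*} [Group G] {C : Subgroup G} (lam : C →* ℂ)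

theorem sum_extendByZero_smul_map_out {A : Type*} [Semiring A] [Algebra ℂ A] (ρ : G →* A)
    (hscalar : ∀ c : C, ρ c = lam c • (1 : A)) {Q : Finset (G ⧸ C)} {g : G}
    (hg : (g : G ⧸ C) ∈ Q) :
    ∑ b ∈ Q, extendByZero lam (b.out⁻¹ * g) • ρ b.out = ρ g := by
  rw [sum_out_eq_of_coset hg (fun x => extendByZero lam (x⁻¹ * g) • ρ x)
      fun x hx => by rw [extendByZero_of_notMem lam hx, zero_smul],
    ← map_eq_extendByZero_smul lam ρ hscalar (inv_out_mul_mem_iff.mpr rfl)]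

theorem sum_conj_extendByZero_mul (hlam : ∀ c : C, ‖lam c‖ = 1) {Q : Finset (G ⧸ C)} {g : G}
    (hg : (g : G ⧸ C) ∈ Q) (h : G) :
    ∑ b ∈ Q, starRingEnd ℂ (extendByZero lam (b.out⁻¹ * g)) * extendByZero lam (b.out⁻¹ * h) =
      extendByZero lam (g⁻¹ * h) := by
  rw [sum_out_eq_of_coset hg
      (fun x => starRingEnd ℂ (extendByZero lam (x⁻¹ * g)) * extendByZero lam (x⁻¹ * h))
      fun x hx => by rw [extendByZero_of_notMem lam hx, map_zero, zero_mul]]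
  exact (extendByZero_inv_mul_eq lam hlam (inv_out_mul_mem_iff.mpr rfl) h).symm

noncomputable def cosetCoeff (f : G →₀ ℂ) (b : G ⧸ C) : ℂ :=
  ∑ h ∈ f.support, f h * extendByZero lam (b.out⁻¹ * h)

theorem sum_smul_map_eq_sum_cosetCoeff_smul {A : Type*} [Semiring A] [Algebra ℂ A]
    (ρ : G →* A) (hscalar : ∀ c : C, ρ c = lam c • (1 : A)) (f : G →₀ ℂ) :
    ∑ g ∈ f.support, f g • ρ g =
      ∑ b ∈ f.support.image ((↑) : G → G ⧸ C), cosetCoeff lam f b • ρ b.out := by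
  simp only [cosetCoeff, sum_smul, mul_smul]
  rw [sum_comm]
  refine sum_congr rfl fun g hg => ?_
  rw [← smul_sum, sum_extendByZero_smul_map_out lam ρ hscalar (mem_image_of_mem _ hg)]

theorem sum_conj_cosetCoeff_mul_self (hlam : ∀ c : C, ‖lam c‖ = 1) (f : G →₀ ℂ) :
    ∑ b ∈ f.support.image ((↑) : G → G ⧸ C),
        starRingEnd ℂ (cosetCoeff lam f b) * cosetCoeff lam f b =
      ∑ g ∈ f.support, ∑ h ∈ f.support,
        starRingEnd ℂ (f g) * f h * extendByZero lam (g⁻¹ * h) := by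
  simp only [cosetCoeff, map_sum, map_mul, sum_mul_sum]
  rw [sum_comm]
  refine sum_congr rfl fun g hg => ?_
  rw [sum_comm]
  refine sum_congr rfl fun h _ => ?_
  rw [← sum_conj_extendByZero_mul lam hlam (mem_image_of_mem _ hg) h, mul_sum]
  exact sum_congr rfl fun b _ => by ring

end CosetExpansion

theorem rho_vanishes_of_gns_kernel_general
    {G : Type*} [Group G] (C : Subgroup G)
    (lam : C →* ℂ) (hlam : ∀ c : C, ‖lam c‖ = 1)
    {H : Type*} [NormedAddCommGroup H] [InnerProductSpace ℂ H]
    (ρ : G →* (H →L[ℂ] H))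
    (hscalar : ∀ c : C, ρ (c : G) = lam c • (1 : H →L[ℂ] H))
    (f : G →₀ ℂ)
    (hker : (∑ g ∈ f.support, ∑ h ∈ f.support,
        if hc : g⁻¹ * h ∈ C then (starRingEnd ℂ) (f g) * f h * lam ⟨g⁻¹ * h, hc⟩
        else 0) = 0) :
    (∑ g ∈ f.support, f g • ρ g) = 0 := by
  simp only [Subgroup.dite_mul_eq_mul_extendByZero] at hker
  rw [← sum_conj_cosetCoeff_mul_self lam hlam] at hker
  have hcoeff := Complex.eq_zero_of_sum_conj_mul_self_eq_zero hker
  rw [sum_smul_map_eq_sum_cosetCoeff_smul lam ρ hscalar]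
  exact sum_eq_zero fun b hb => by rw [hcoeff b hb, zero_smul]

/-- Proposition (`algebra`): let `ρ` be a unitary representation of `G` on a Hilbert
space with `ρ(c) = λ(c)·1` for all `c` in a subgroup `C`, where `λ` is a
one-dimensional unitary representation of `C`.  If an element `f = Σ t_g g` of the
group algebra `ℂG` satisfies `Σ_{g⁻¹h ∈ C} conj(t_g) t_h λ(g⁻¹h) = 0`, then
`ρ(f) = 0`. -/
theorem rho_vanishes_of_gns_kernel
    {G : Type*} [Group G] (C : Subgroup G)
    (lam : C →* ℂ) (hlam : ∀ c : C, ‖lam c‖ = 1)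
    {H : Type*} [NormedAddCommGroup H] [InnerProductSpace ℂ H] [CompleteSpace H]
    (ρ : G →* (H →L[ℂ] H))
    (hunitary : ∀ g : G, ContinuousLinearMap.adjoint (ρ g) = ρ g⁻¹)
    (hscalar : ∀ c : C, ρ (c : G) = lam c • (1 : H →L[ℂ] H))
    (f : G →₀ ℂ)
    (hker : (∑ g ∈ f.support, ∑ h ∈ f.support,
        if hc : g⁻¹ * h ∈ C then (starRingEnd ℂ) (f g) * f h * lam ⟨g⁻¹ * h, hc⟩
        else 0) = 0) :
    (∑ g ∈ f.support, f g • ρ g) = 0 :=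
  rho_vanishes_of_gns_kernel_general C lam hlam ρ hscalar f hker
end

section
/- Let Γ be a group and N a central subgroup such that: (a) the quotient Γ/N is not residually finite, and (b) for every K ∈ ℕ there exists g₀ ∈ Γ with g₀^k ∉ N for all k with 1 ≤ |k| ≤ K. Then the amalgamated free product Γ *_{N=N} Γ is not residually finite. -/
open Monoid

/-- Transport a permutation group along an equivalence of types. -/
def permMulEquivAux {α β : Type*} (e : α ≃ β) : Equiv.Perm α ≃* Equiv.Perm β :=
  { e.permCongr with
    map_mul' := by
      intro p q
      ext x
      simp [Equiv.permCongr_apply, Equiv.Perm.mul_apply] }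

/-- Lemma (`HNNembeds` (ii)): let `N` be a central subgroup of `Γ` such that `Γ/N`
is not residually finite and for every `K` there is `g₀ ∈ Γ` with `g₀^k ∉ N` for all
`k` with `1 ≤ |k| ≤ K`.  Then the amalgamated free product `Γ *_{N=N} Γ` is not
residually finite. -/
theorem central_amalgam_not_residually_finite
    {Γ : Type*} [Group Γ] (N : Subgroup Γ) [N.Normal]
    (hN : N ≤ Subgroup.center Γ)
    (hquot : ¬ IsResiduallyFinite (Γ ⧸ N))
    (hpow : ∀ K : ℕ, ∃ g₀ : Γ, ∀ k : ℤ, k ≠ 0 → |k| ≤ (K : ℤ) → g₀ ^ k ∉ N) :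
    ¬ IsResiduallyFinite (PushoutI (fun _ : Bool => N.subtype)) := by
  classical
  set φ : Bool → ↥N →* Γ := fun _ : Bool => N.subtype with hφdef
  have hφinj : ∀ i : Bool, Function.Injective (φ i) := fun _ => N.subtype_injective
  -- Extract an unseparable element of `Γ ⧸ N`.
  simp only [IsResiduallyFinite, not_forall, not_exists] at hquot
  obtain ⟨q, hq1, hq⟩ := hquot
  obtain ⟨g, rfl⟩ := QuotientGroup.mk_surjective q
  have hgN : g ∉ N := by
    intro h
    exact hq1 ((QuotientGroup.eq_one_iff g).2 h)
  intro hRF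
  -- The witness element in the amalgam.
  set w : PushoutI φ := PushoutI.of (φ := φ) true g * (PushoutI.of (φ := φ) false g)⁻¹
    with hwdef
  have hw1 : w ≠ 1 := by
    intro h
    have heq : PushoutI.of (φ := φ) true g = PushoutI.of (φ := φ) false g := by
      rw [hwdef] at h
      group at h ⊢
      exact mul_inv_eq_one.1 h
    have hmem : PushoutI.of (φ := φ) true g ∈
        (PushoutI.of (φ := φ) true).range ⊓ (PushoutI.of (φ := φ) false).range := by
      refine ⟨⟨g, rfl⟩, ⟨g, heq.symm⟩⟩
    rw [PushoutI.inf_of_range_eq_base_range hφinj (by simp : (true : Bool) ≠ false)] at hmem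
    obtain ⟨n, hn⟩ := hmem
    have : PushoutI.of (φ := φ) true (N.subtype n) = PushoutI.of (φ := φ) true g := by
      rw [PushoutI.of_apply_eq_base φ true n, hn]
    have hng : (N.subtype n : Γ) = g := PushoutI.of_injective hφinj true this
    exact hgN (hng ▸ n.2)
  obtain ⟨F, _, _, f, hfw⟩ := hRF w hw1
  apply hfw
  -- Two homomorphisms `Γ →* F` agreeing on `N`.
  set f₁ : Γ →* F := f.comp (PushoutI.of (φ := φ) true) with hf₁
  set f₂ : Γ →* F := f.comp (PushoutI.of (φ := φ) false) with hf₂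
  have hagree : ∀ n : Γ, n ∈ N → f₁ n = f₂ n := by
    intro n hn
    have h1 : PushoutI.of (φ := φ) true (N.subtype ⟨n, hn⟩) = PushoutI.base φ ⟨n, hn⟩ :=
      PushoutI.of_apply_eq_base φ true ⟨n, hn⟩
    have h2 : PushoutI.of (φ := φ) false (N.subtype ⟨n, hn⟩) = PushoutI.base φ ⟨n, hn⟩ :=
      PushoutI.of_apply_eq_base φ false ⟨n, hn⟩
    simp only [hf₁, hf₂, MonoidHom.comp_apply]
    have : (N.subtype ⟨n, hn⟩ : Γ) = n := rfl
    rw [← this, h1, h2]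
  -- The equalizer subgroup.
  set H : Subgroup Γ :=
    { carrier := {x : Γ | f₁ x = f₂ x}
      one_mem' := by simp
      mul_mem' := by
        intro a b ha hb
        simp only [Set.mem_setOf_eq, map_mul] at *
        rw [ha, hb]
      inv_mem' := by
        intro a ha
        simp only [Set.mem_setOf_eq, map_inv] at *
        rw [ha] } with hHdef
  have hNH : N ≤ H := fun n hn => hagree n hn
  -- `Γ ⧸ H` is finite, via the injection `xH ↦ f₁ x * (f₂ x)⁻¹`.
  have hfin : Finite (Γ ⧸ H) := by
    have : ∃ e : Γ ⧸ H → F, Function.Injective e := by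
      refine ⟨Quotient.lift (fun x : Γ => f₁ x * (f₂ x)⁻¹) ?_, ?_⟩
      · intro a b hab
        have hab' : a⁻¹ * b ∈ H := QuotientGroup.leftRel_apply.1 hab
        have : f₁ (a⁻¹ * b) = f₂ (a⁻¹ * b) := hab'
        simp only [map_mul, map_inv] at this
        have h2 : f₁ b = f₁ a * (f₂ a)⁻¹ * f₂ b := by
          rw [mul_assoc]
          rw [inv_mul_eq_iff_eq_mul] at this
          rw [← this]
        simp only [h2]
        group
      · intro x y
        induction x using Quotient.inductionOn with | h a =>
        induction y using Quotient.inductionOn with | h b =>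
        intro hab
        simp only [Quotient.lift_mk] at hab
        show (QuotientGroup.mk a : Γ ⧸ H) = QuotientGroup.mk b
        rw [QuotientGroup.eq]
        show f₁ (a⁻¹ * b) = f₂ (a⁻¹ * b)
        simp only [map_mul, map_inv]
        rw [mul_inv_eq_iff_eq_mul] at hab
        rw [hab]
        group
    obtain ⟨e, he⟩ := this
    exact Finite.of_injective e he
  -- The coset permutation representation kills `N` (as `N` is central).
  set ρ : Γ →* Equiv.Perm (Γ ⧸ H) := MulAction.toPermHom Γ (Γ ⧸ H) with hρ
  have hker : ∀ n : Γ, n ∈ N → ρ n = 1 := by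
    intro n hn
    ext x
    induction x using Quotient.inductionOn with | h a =>
    show (QuotientGroup.mk (n * a) : Γ ⧸ H) = QuotientGroup.mk a
    apply QuotientGroup.eq.2
    have hc := Subgroup.mem_center_iff.1 (hN (N.inv_mem hn))
    have heq : (n * a)⁻¹ * a = n⁻¹ := by
      rw [mul_inv_rev, mul_assoc, ← hc a]
      group
    rw [heq]
    exact hNH (N.inv_mem hn)
  -- Descend to `Γ ⧸ N`, transport to a `Type 0` finite group, and conclude `g ∈ H`.
  set ρ' : Γ ⧸ N →* Equiv.Perm (Γ ⧸ H) :=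
    QuotientGroup.lift N ρ (fun n hn => hker n hn) with hρ'
  have : Fintype (Γ ⧸ H) := Fintype.ofFinite _
  set e : Γ ⧸ H ≃ Fin (Fintype.card (Γ ⧸ H)) := Fintype.equivFin _ with he
  set ψ : Γ ⧸ N →* Equiv.Perm (Fin (Fintype.card (Γ ⧸ H))) :=
    (permMulEquivAux e).toMonoidHom.comp ρ' with hψ
  have hψg : ψ (QuotientGroup.mk g) = 1 :=
    not_not.1 (hq (Equiv.Perm (Fin (Fintype.card (Γ ⧸ H)))) inferInstance inferInstance ψ)
  have hρ'g : ρ' (QuotientGroup.mk g) = 1 := by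
    have := hψg
    simp only [hψ, MonoidHom.comp_apply, MulEquiv.coe_toMonoidHom] at this
    exact (map_eq_one_iff _ (permMulEquivAux e).injective).1 this
  have hρg : ρ g = 1 := by
    have : ρ' (QuotientGroup.mk g) = ρ g := QuotientGroup.lift_mk' N _ g
    rw [← this, hρ'g]
  have hgH : g ∈ H := by
    have hfix : ρ g (QuotientGroup.mk (1 : Γ)) = QuotientGroup.mk (1 : Γ) := by
      rw [hρg]; rfl
    have : (QuotientGroup.mk (g * 1) : Γ ⧸ H) = QuotientGroup.mk 1 := hfix
    have := QuotientGroup.eq.1 this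
    simpa using H.inv_mem this
  -- Finally, `f w = 1`.
  have hgeq : f₁ g = f₂ g := hgH
  rw [hwdef]
  simp only [map_mul, map_inv]
  have : f (PushoutI.of (φ := φ) true g) = f₁ g := rfl
  rw [this]
  have : f (PushoutI.of (φ := φ) false g) = f₂ g := rfl
  rw [this, hgeq]
  group
end
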